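/- arXiv:0906.3405 — 2 statements merged into one kernel-verified Lean document; each statement's English description precedes it below -/
import Mathlib

section
/- Let n ≥ 1 and let A, X : ℤ × ℤ → ℚ be functions such that A(i,j) = X(i,j) + A(i,j+1) − A(i+1,j+1) holds for all 1 ≤ i < j ≤ n, and such that A(i, n+1) = 0 for all i and A(i',j') = 0 whenever i' ≥ j'. Then for all 1 ≤ i < j ≤ n, A(i,j) = ∑_{p=0}^{n-j} ∑_{q=0}^{p} (−1)^q · C(p,q) · X(i+q, j+p). -/
/-!
Writing the recurrence as `A(i, j) = X(i, j) - Δ A(·, j + 1) (i)`, with `Δ` the forward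
difference in the first coordinate, and unrolling it down to the vanishing row `j = n + 1`
gives `A(i, j) = ∑ₚ (-1)ᵖ Δᵖ X(·, j + p) (i)`. Expanding `Δᵖ` by the binomial theorem
yields the stated double sum.
-/

open Finset fwdDiff

theorem neg_one_pow_smul_fwdDiff_iter_eq_sum_shift {M G : Type*} [AddCommMonoid M]
    [AddCommGroup G] (h : M) (f : M → G) (p : ℕ) (y : M) :
    (-1 : ℤ) ^ p • (Δ_[h])^[p] f y
      = ∑ q ∈ range (p + 1), ((-1 : ℤ) ^ q * p.choose q) • f (y + q • h) := by
  rw [fwdDiff_iter_eq_sum_shift, smul_sum]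
  refine sum_congr rfl fun q hq => ?_
  obtain ⟨m, rfl⟩ := Nat.exists_eq_add_of_le (Nat.lt_succ_iff.mp (mem_range.mp hq))
  have hsign : (-1 : ℤ) ^ (m + m) = 1 := Even.neg_one_pow ⟨m, rfl⟩
  rw [smul_smul, Nat.add_sub_cancel_left, ← mul_assoc, pow_add, mul_assoc ((-1) ^ q), ← pow_add,
    hsign, mul_one]

theorem fwdDiff_iter_succ_apply {M G : Type*} [AddCommMonoid M] [AddCommGroup G] (h : M)
    (f : M → G) (p : ℕ) (y : M) :
    (Δ_[h])^[p + 1] f y = (Δ_[h])^[p] f (y + h) - (Δ_[h])^[p] f y := by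
  rw [Function.iterate_succ_apply', fwdDiff]

theorem eq_sum_fwdDiff_iter_of_recurrence {G : Type*} [AddCommGroup G] {n : ℤ}
    {A X : ℤ × ℤ → G}
    (hrec : ∀ i j : ℤ, 1 ≤ i → i < j → j ≤ n →
      A (i, j) = X (i, j) + A (i, j + 1) - A (i + 1, j + 1))
    (htop : ∀ i : ℤ, A (i, n + 1) = 0) (k : ℕ) :
    ∀ i j : ℤ, 1 ≤ i → i < j → j + k = n →
      A (i, j) = ∑ p ∈ range (k + 1), (-1 : ℤ) ^ p • (Δ_[1])^[p] (fun i' ↦ X (i', j + p)) i := by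
  induction k with
  | zero =>
    intro i j hi hij hj
    rw [hrec i j hi hij (by omega), show j + 1 = n + 1 by omega, htop, htop]
    simp
  | succ k ih =>
    intro i j hi hij hj
    have hcol : ∀ p : ℕ, j + 1 + p = j + (p + 1 : ℕ) := fun p => by push_cast; ring
    rw [hrec i j hi hij (by omega), ih i (j + 1) hi (by omega) (by omega),
      ih (i + 1) (j + 1) (by omega) (by omega) (by omega), sum_range_succ' _ (k + 1),
      add_sub_assoc, ← sum_sub_distrib, add_comm]
    congr 1
    · refine sum_congr rfl fun p _ => ?_
      rw [fwdDiff_iter_succ_apply, pow_succ, mul_neg_one, neg_smul, ← smul_neg, neg_sub,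
        ← smul_sub, hcol]
    · simp

theorem recurrence_solution_general (n : ℤ) (A X : ℤ × ℤ → ℚ)
    (hrec : ∀ i j : ℤ, 1 ≤ i → i < j → j ≤ n →
      A (i, j) = X (i, j) + A (i, j + 1) - A (i + 1, j + 1))
    (htop : ∀ i : ℤ, A (i, n + 1) = 0) :
    ∀ i j : ℤ, 1 ≤ i → i < j → j ≤ n →
      A (i, j) = ∑ p ∈ Finset.range ((n - j).toNat + 1), ∑ q ∈ Finset.range (p + 1),
        (-1 : ℚ) ^ q * (p.choose q : ℚ) * X (i + q, j + p) := by
  intro i j hi hij hjn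
  rw [eq_sum_fwdDiff_iter_of_recurrence hrec htop (n - j).toNat i j hi hij (by omega)]
  refine sum_congr rfl fun p _ => ?_
  rw [neg_one_pow_smul_fwdDiff_iter_eq_sum_shift]
  simp [zsmul_eq_mul]

theorem recurrence_solution (n : ℤ) (hn : 1 ≤ n) (A X : ℤ × ℤ → ℚ)
    (hrec : ∀ i j : ℤ, 1 ≤ i → i < j → j ≤ n →
      A (i, j) = X (i, j) + A (i, j + 1) - A (i + 1, j + 1))
    (htop : ∀ i : ℤ, A (i, n + 1) = 0)
    (hzero : ∀ i j : ℤ, j ≤ i → A (i, j) = 0) :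
    ∀ i j : ℤ, 1 ≤ i → i < j → j ≤ n →
      A (i, j) = ∑ p ∈ Finset.range ((n - j).toNat + 1), ∑ q ∈ Finset.range (p + 1),
        (-1 : ℚ) ^ q * (p.choose q : ℚ) * X (i + q, j + p) :=
  recurrence_solution_general n A X hrec htop
end

section
/- Let X : ℤ × ℤ → ℚ be any function and define A(i,j) = ∑_{p=0}^{n−j} ∑_{q=0}^{p} (−1)^q C(p,q) X(i+q, j+p) for 1 ≤ i < j ≤ n (and A(i, n+1) := 0). Then A satisfies the recurrence X(i,j) = A(i+1,j+1) + A(i,j) − A(i,j+1) for all 1 ≤ i < j ≤ n, where A(i+1,j+1) is interpreted as 0 when i+1 = j+1 or j+1 = n+1 per the definition. -/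
/-!
With `T_k(i, j) = ∑_{p ≤ k} ∑_{q ≤ p} (-1)^q C(p, q) X(i+q, j+p)`, the hypothesis says
`A(i, j) = T_{n-j}(i, j)`. By Pascal's rule, the alternating binomial sum of row `p + 1` is
the difference of the row-`p` sums shifted by `(0, 1)` and by `(1, 1)`. Hence
`T_{k+1}(i, j) = X(i, j) + T_k(i, j+1) - T_k(i+1, j+1)`, which gives the recurrence for `j < n`.
For `j = n` the recurrence reduces to `T_0(i, n) = X(i, n)`.
-/

open Finset

lemma sum_range_succ_neg_one_pow_mul_choose_succ {R : Type*} [CommRing R] (p : ℕ) (f : ℕ → R) :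
    ∑ q ∈ range (p + 2), (-1) ^ q * ((p + 1).choose q : R) * f q =
      ∑ q ∈ range (p + 1), (-1) ^ q * (p.choose q : R) * (f q - f (q + 1)) := by
  have shifted :
      ∑ q ∈ range (p + 1), (-1) ^ (q + 1) * (p.choose (q + 1) : R) * f (q + 1) + f 0 =
        ∑ q ∈ range (p + 1), (-1) ^ q * (p.choose q : R) * f q := by
    have h := sum_range_succ' (fun q ↦ (-1) ^ q * (p.choose q : R) * f q) (p + 1)
    rw [sum_range_succ, Nat.choose_succ_self] at h
    simpa using h.symm
  have pascal : ∀ q ∈ range (p + 1),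
      (-1) ^ (q + 1) * ((p + 1).choose (q + 1) : R) * f (q + 1) =
        -((-1) ^ q * (p.choose q : R) * f (q + 1)) +
          (-1) ^ (q + 1) * (p.choose (q + 1) : R) * f (q + 1) := by
    intro q _
    rw [Nat.choose_succ_succ, Nat.cast_add]
    ring
  rw [sum_range_succ', sum_congr rfl pascal, sum_add_distrib, sum_neg_distrib]
  simp only [mul_sub, sum_sub_distrib, ← shifted]
  simp
  ring

section TriangleSum

variable {R : Type*} [CommRing R]

def triangleSum (X : ℤ × ℤ → R) (k : ℕ) (i j : ℤ) : R :=
  ∑ p ∈ range (k + 1), ∑ q ∈ range (p + 1), (-1) ^ q * (p.choose q : R) * X (i + q, j + p)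

@[simp]
lemma triangleSum_zero (X : ℤ × ℤ → R) (i j : ℤ) : triangleSum X 0 i j = X (i, j) := by
  simp [triangleSum]

lemma triangleSum_succ (X : ℤ × ℤ → R) (k : ℕ) (i j : ℤ) :
    triangleSum X (k + 1) i j =
      X (i, j) + triangleSum X k i (j + 1) - triangleSum X k (i + 1) (j + 1) := by
  have row : ∀ p : ℕ,
      ∑ q ∈ range (p + 2), (-1) ^ q * ((p + 1).choose q : R) * X (i + q, j + (p + 1 : ℕ)) =
        ∑ q ∈ range (p + 1), (-1) ^ q * (p.choose q : R) * X (i + q, j + 1 + p) -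
          ∑ q ∈ range (p + 1), (-1) ^ q * (p.choose q : R) * X (i + 1 + q, j + 1 + p) := by
    intro p
    rw [sum_range_succ_neg_one_pow_mul_choose_succ, ← sum_sub_distrib]
    refine sum_congr rfl fun q _ ↦ ?_
    push_cast
    ring_nf
  rw [triangleSum, sum_range_succ', sum_congr rfl fun p _ ↦ row p, sum_sub_distrib]
  simp [triangleSum, add_sub_assoc, add_comm]

end TriangleSum

theorem explicit_formula_satisfies_recurrence_general (n : ℤ)
    (X : ℤ × ℤ → ℚ) (A : ℤ × ℤ → ℚ)
    (hA : ∀ i j : ℤ, 1 ≤ i → i < j → j ≤ n →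
      A (i, j) = ∑ p ∈ Finset.range ((n - j).toNat + 1), ∑ q ∈ Finset.range (p + 1),
        (-1 : ℚ) ^ q * (p.choose q : ℚ) * X (i + q, j + p))
    (hA0 : ∀ i j : ℤ, j ≤ i ∨ n < j → A (i, j) = 0) :
    ∀ i j : ℤ, 1 ≤ i → i < j → j ≤ n →
      X (i, j) = A (i + 1, j + 1) + A (i, j) - A (i, j + 1) := by
  intro i j hi hij hjn
  change ∀ i j : ℤ, 1 ≤ i → i < j → j ≤ n → A (i, j) = triangleSum X (n - j).toNat i j at hA
  rcases hjn.eq_or_lt with rfl | hjn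
  · rw [hA0 (i + 1) (j + 1) (.inr (by omega)), hA0 i (j + 1) (.inr (by omega)),
      hA i j hi hij le_rfl, Int.sub_self, Int.toNat_zero, triangleSum_zero]
    ring
  · have hlen : (n - j).toNat = (n - (j + 1)).toNat + 1 := by omega
    rw [hA i j hi hij hjn.le, hA i (j + 1) hi (by omega) hjn,
      hA (i + 1) (j + 1) (by omega) (by omega) hjn, hlen, triangleSum_succ]
    ring

theorem explicit_formula_satisfies_recurrence (n : ℤ) (hn : 1 ≤ n)
    (X : ℤ × ℤ → ℚ) (A : ℤ × ℤ → ℚ)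
    (hA : ∀ i j : ℤ, 1 ≤ i → i < j → j ≤ n →
      A (i, j) = ∑ p ∈ Finset.range ((n - j).toNat + 1), ∑ q ∈ Finset.range (p + 1),
        (-1 : ℚ) ^ q * (p.choose q : ℚ) * X (i + q, j + p))
    (hA0 : ∀ i j : ℤ, j ≤ i ∨ n < j → A (i, j) = 0) :
    ∀ i j : ℤ, 1 ≤ i → i < j → j ≤ n →
      X (i, j) = A (i + 1, j + 1) + A (i, j) - A (i, j + 1) :=
  explicit_formula_satisfies_recurrence_general n X A hA hA0
end
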